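/- arXiv:1706.03078 — 4 statements merged into one kernel-verified Lean document; each statement's English description precedes it below -/
import Mathlib

section
/- General bound with operator norms (Proposition 4). Let H₀, H₁, …, H_n and P₁, …, P_n be separable real Hilbert spaces, and let τ : ℝ^d → ℝ^d be C¹ with ‖∇τ‖_∞ ≤ 1/2, so that the action operator L_τ is bounded on each Bochner space L²(ℝ^d, ·). For k = 1, …, n let P_k : L²(ℝ^d, H_{k-1}) → L²(ℝ^d, P_k) be a linear norm-preserving operator (‖P_k x‖ = ‖x‖ for all x); let M_k : L²(ℝ^d, P_k) → L²(ℝ^d, H_k) satisfy ‖M_k y − M_k y'‖ ≤ ‖y − y'‖ and ‖M_k y‖ ≤ ‖y‖ for all y, y', and M_k L_τ = L_τ M_k; and let A_k : L²(ℝ^d, H_k) → L²(ℝ^d, H_k) (for k = 0, …, n, with A_0 on L²(ℝ^d, H₀)) be bounded linear operators with ‖A_k‖ ≤ 1. Define Φ_n(x) = A_n M_n P_n A_{n-1} M_{n-1} P_{n-1} ⋯ A_1 M_1 P_1 A_0 x. Then for every x ∈ L²(ℝ^d, H₀): ‖Φ_n(L_τ x) − Φ_n(x)‖ ≤ ( Σ_{k=1}^{n}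 ‖[P_k A_{k-1}, L_τ]‖ + ‖[A_n, L_τ]‖ + ‖L_τ A_n − A_n‖ ) ‖x‖, where [A, B] = AB − BA and ‖·‖ denotes the L² → L² operator norm. -/
/-!
Run the signal through the layers `w ↦ M_k (P_k (A_k w))` before the last `A_n`, once from
`L_τ x` and once from `x`. A layer is `1`-Lipschitz and `M_k` commutes with `L_τ`, so it carries
the defect `‖u − L_τ v‖` between the two runs to the next level, increased only by the failure
`‖[P_k A_k, L_τ]‖ ‖v‖` of `P_k A_k` to commute with `L_τ`; the defect starts at `0` and
`‖v‖ ≤ ‖x‖` throughout. Finally `A_n u` is compared with `A_n v` through `A_n (L_τ v)` and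
`L_τ (A_n v)`.
-/

open MeasureTheory

section Cascade

variable {E : ℕ → Type*}

def depIterate (Φ : ∀ k, E k → E (k + 1)) (x : E 0) : ∀ k, E k
  | 0 => x
  | k + 1 => Φ k (depIterate Φ x k)

theorem eq_apply_depIterate (A : ∀ k, E k → E k) (f : ∀ k, E k → E (k + 1)) (n : ℕ)
    (a : E 0) (y : ∀ k, E k) (hy0 : y 0 = A 0 a)
    (hy : ∀ k < n, y (k + 1) = A (k + 1) (f k (y k))) :
    ∀ k ≤ n, y k = A k (depIterate (fun k w => f k (A k w)) a k) := by
  intro k hk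
  induction k with
  | zero => exact hy0
  | succ k ih => rw [hy k hk, ih (Nat.le_of_succ_le hk)]; rfl

variable [∀ k, SeminormedAddCommGroup (E k)] (Φ : ∀ k, E k → E (k + 1))

theorem norm_depIterate_le (hΦ : ∀ k w, ‖Φ k w‖ ≤ ‖w‖) (x : E 0) :
    ∀ k, ‖depIterate Φ x k‖ ≤ ‖x‖
  | 0 => le_rfl
  | k + 1 => (hΦ k _).trans (norm_depIterate_le hΦ x k)

theorem norm_depIterate_sub_le (L : ∀ k, E k → E k) (c : ℕ → ℝ)
    (hΦ : ∀ k a b, ‖Φ k a - L (k + 1) (Φ k b)‖ ≤ ‖a - L k b‖ + c k * ‖b‖) (a b : E 0) :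
    ∀ n, ‖depIterate Φ a n - L n (depIterate Φ b n)‖ ≤
      ‖a - L 0 b‖ + ∑ k ∈ Finset.range n, c k * ‖depIterate Φ b k‖
  | 0 => by simp [depIterate]
  | n + 1 => by
    rw [Finset.sum_range_succ, ← add_assoc]
    exact (hΦ n _ _).trans (add_le_add_left (norm_depIterate_sub_le L c hΦ a b n) _)

end Cascade

section Layer

variable {𝕜 E F G : Type*} [NontriviallyNormedField 𝕜]
  [SeminormedAddCommGroup E] [NormedSpace 𝕜 E] [SeminormedAddCommGroup F] [NormedSpace 𝕜 F]
  [SeminormedAddCommGroup G]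

theorem ContinuousLinearMap.norm_apply_sub_apply_le (f g : E →L[𝕜] F) (v : E) :
    ‖f v - g v‖ ≤ ‖f - g‖ * ‖v‖ := by
  simpa using (f - g).le_opNorm v

theorem norm_layer_sub_le (B : E →L[𝕜] F) (hB : ∀ w, ‖B w‖ ≤ ‖w‖)
    (LE : E →L[𝕜] E) (LF : F →L[𝕜] F) (LG : G → G) (M : F → G)
    (hMlip : ∀ y y', ‖M y - M y'‖ ≤ ‖y - y'‖) (hMcomm : ∀ y, M (LF y) = LG (M y)) (u v : E) :
    ‖M (B u) - LG (M (B v))‖ ≤ ‖u - LE v‖ + ‖B.comp LE - LF.comp B‖ * ‖v‖ := by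
  rw [← hMcomm]
  calc ‖M (B u) - M (LF (B v))‖
      ≤ ‖B u - B (LE v)‖ + ‖B (LE v) - LF (B v)‖ :=
        (hMlip _ _).trans (norm_sub_le_norm_sub_add_norm_sub _ _ _)
    _ ≤ ‖u - LE v‖ + ‖B.comp LE - LF.comp B‖ * ‖v‖ := by
        gcongr
        · simpa only [map_sub] using hB (u - LE v)
        · exact (B.comp LE).norm_apply_sub_apply_le (LF.comp B) v

theorem norm_apply_sub_apply_le_of_opNorm_le_one (A L : E →L[𝕜] E) (hA : ‖A‖ ≤ 1) (u v : E) :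
    ‖A u - A v‖ ≤ ‖u - L v‖ + (‖A.comp L - L.comp A‖ + ‖L.comp A - A‖) * ‖v‖ := by
  calc ‖A u - A v‖
      ≤ ‖A u - A (L v)‖ + ‖A (L v) - L (A v)‖ + ‖L (A v) - A v‖ :=
        (norm_sub_le_norm_sub_add_norm_sub _ _ _).trans
          (add_le_add_left (norm_sub_le_norm_sub_add_norm_sub _ _ _) _)
    _ ≤ ‖u - L v‖ + ‖A.comp L - L.comp A‖ * ‖v‖ + ‖L.comp A - A‖ * ‖v‖ := by
        gcongr
        · simpa only [map_sub, one_mul] using A.le_of_opNorm_le hA (u - L v)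
        · exact (A.comp L).norm_apply_sub_apply_le (L.comp A) v
        · exact (L.comp A).norm_apply_sub_apply_le A v
    _ = _ := by ring

end Layer

theorem stmt_2_general {d : ℕ} (n : ℕ)
    (H : ℕ → Type*) [∀ k, NormedAddCommGroup (H k)] [∀ k, InnerProductSpace ℝ (H k)]
    (PP : ℕ → Type*) [∀ k, NormedAddCommGroup (PP k)] [∀ k, InnerProductSpace ℝ (PP k)]
    (LτH : ∀ k, Lp (H k) 2 (volume : Measure (EuclideanSpace ℝ (Fin d))) →L[ℝ]
                Lp (H k) 2 (volume : Measure (EuclideanSpace ℝ (Fin d))))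
    (LτP : ∀ k, Lp (PP k) 2 (volume : Measure (EuclideanSpace ℝ (Fin d))) →L[ℝ]
                Lp (PP k) 2 (volume : Measure (EuclideanSpace ℝ (Fin d))))
    (P : ∀ k, Lp (H k) 2 (volume : Measure (EuclideanSpace ℝ (Fin d))) →L[ℝ]
              Lp (PP k) 2 (volume : Measure (EuclideanSpace ℝ (Fin d))))
    (hPnorm : ∀ k x, ‖P k x‖ = ‖x‖)
    (M : ∀ k, Lp (PP k) 2 (volume : Measure (EuclideanSpace ℝ (Fin d))) →
              Lp (H (k + 1)) 2 (volume : Measure (EuclideanSpace ℝ (Fin d))))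
    (hMlip : ∀ k y y', ‖M k y - M k y'‖ ≤ ‖y - y'‖)
    (hMnorm : ∀ k y, ‖M k y‖ ≤ ‖y‖)
    (hMcomm : ∀ k y, M k (LτP k y) = LτH (k + 1) (M k y))
    (A : ∀ k, Lp (H k) 2 (volume : Measure (EuclideanSpace ℝ (Fin d))) →L[ℝ]
              Lp (H k) 2 (volume : Measure (EuclideanSpace ℝ (Fin d))))
    (hA : ∀ k, ‖A k‖ ≤ 1)
    (x : Lp (H 0) 2 (volume : Measure (EuclideanSpace ℝ (Fin d))))
    (y z : ∀ k, Lp (H k) 2 (volume : Measure (EuclideanSpace ℝ (Fin d))))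
    (hy0 : y 0 = A 0 (LτH 0 x)) (hz0 : z 0 = A 0 x)
    (hy : ∀ k < n, y (k + 1) = A (k + 1) (M k (P k (y k))))
    (hz : ∀ k < n, z (k + 1) = A (k + 1) (M k (P k (z k)))) :
    ‖y n - z n‖ ≤
      ((∑ k ∈ Finset.range n,
          ‖((P k).comp (A k)).comp (LτH k) - (LτP k).comp ((P k).comp (A k))‖) +
        ‖(A n).comp (LτH n) - (LτH n).comp (A n)‖ +
        ‖(LτH n).comp (A n) - A n‖) * ‖x‖ := by
  have hPA : ∀ k w, ‖P k (A k w)‖ ≤ ‖w‖ := fun k w => by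
    simpa only [hPnorm, one_mul] using (A k).le_of_opNorm_le (hA k) w
  have hv : ∀ k, ‖depIterate (fun k w => M k (P k (A k w))) x k‖ ≤ ‖x‖ :=
    norm_depIterate_le (fun k w => M k (P k (A k w))) (fun k w => (hMnorm k _).trans (hPA k w)) x
  have hdefect := norm_depIterate_sub_le (fun k w => M k (P k (A k w))) (fun k => LτH k) _
    (fun k => norm_layer_sub_le ((P k).comp (A k)) (hPA k) (LτH k) (LτP k) (LτH (k + 1)) (M k)
      (hMlip k) (hMcomm k)) (LτH 0 x) x n
  rw [eq_apply_depIterate (fun k => A k) (fun k v => M k (P k v)) n _ y hy0 hy n le_rfl,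
    eq_apply_depIterate (fun k => A k) (fun k v => M k (P k v)) n _ z hz0 hz n le_rfl]
  refine (norm_apply_sub_apply_le_of_opNorm_le_one _ (LτH n) (hA n) _ _).trans ?_
  rw [sub_self, norm_zero, zero_add] at hdefect
  have hsum := Finset.sum_le_sum fun k (_ : k ∈ Finset.range n) =>
    mul_le_mul_of_nonneg_left (hv k) (norm_nonneg
      (((P k).comp (A k)).comp (LτH k) - (LτP k).comp ((P k).comp (A k))))
  rw [← Finset.sum_mul] at hsum
  have hcomm := mul_le_mul_of_nonneg_left (hv n)
    (add_nonneg (norm_nonneg ((A n).comp (LτH n) - (LτH n).comp (A n)))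
      (norm_nonneg ((LτH n).comp (A n) - A n)))
  linarith

/-- General bound with operator norms (Proposition 4): for the multilayer representation
`Φ_n(x) = A_n M_n P_n ⋯ A_1 M_1 P_1 A_0 x`, where the `P_k` are linear norm-preserving,
the `M_k` are non-expansive, norm-non-increasing and commute with `L_τ`, and the `A_k`
are linear with `‖A_k‖ ≤ 1`,
`‖Φ_n(L_τ x) − Φ_n(x)‖ ≤ (∑_{k=1}^n ‖[P_k A_{k-1}, L_τ]‖ + ‖[A_n, L_τ]‖ + ‖L_τ A_n − A_n‖) ‖x‖`.
Here layer `k+1` (for `k = 0, …, n−1`) maps `L²(ℝ^d, H k)` into `L²(ℝ^d, H (k+1))` through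
the patch space `L²(ℝ^d, PP k)`. -/
theorem stmt_2 {d : ℕ} (n : ℕ)
    (H : ℕ → Type*) [∀ k, NormedAddCommGroup (H k)] [∀ k, InnerProductSpace ℝ (H k)]
    [∀ k, CompleteSpace (H k)] [∀ k, SecondCountableTopology (H k)]
    (PP : ℕ → Type*) [∀ k, NormedAddCommGroup (PP k)] [∀ k, InnerProductSpace ℝ (PP k)]
    [∀ k, CompleteSpace (PP k)] [∀ k, SecondCountableTopology (PP k)]
    (τ : EuclideanSpace ℝ (Fin d) → EuclideanSpace ℝ (Fin d))
    (hτ : ContDiff ℝ 1 τ) (hgrad : ∀ u, ‖fderiv ℝ τ u‖ ≤ 1 / 2)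
    (LτH : ∀ k, Lp (H k) 2 (volume : Measure (EuclideanSpace ℝ (Fin d))) →L[ℝ]
                Lp (H k) 2 (volume : Measure (EuclideanSpace ℝ (Fin d))))
    (hLτH : ∀ k (x : Lp (H k) 2 (volume : Measure (EuclideanSpace ℝ (Fin d)))),
      (LτH k x : EuclideanSpace ℝ (Fin d) → H k) =ᵐ[volume] fun u => x (u - τ u))
    (LτP : ∀ k, Lp (PP k) 2 (volume : Measure (EuclideanSpace ℝ (Fin d))) →L[ℝ]
                Lp (PP k) 2 (volume : Measure (EuclideanSpace ℝ (Fin d))))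
    (hLτP : ∀ k (y : Lp (PP k) 2 (volume : Measure (EuclideanSpace ℝ (Fin d)))),
      (LτP k y : EuclideanSpace ℝ (Fin d) → PP k) =ᵐ[volume] fun u => y (u - τ u))
    (P : ∀ k, Lp (H k) 2 (volume : Measure (EuclideanSpace ℝ (Fin d))) →L[ℝ]
              Lp (PP k) 2 (volume : Measure (EuclideanSpace ℝ (Fin d))))
    (hPnorm : ∀ k x, ‖P k x‖ = ‖x‖)
    (M : ∀ k, Lp (PP k) 2 (volume : Measure (EuclideanSpace ℝ (Fin d))) →
              Lp (H (k + 1)) 2 (volume : Measure (EuclideanSpace ℝ (Fin d))))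
    (hMlip : ∀ k y y', ‖M k y - M k y'‖ ≤ ‖y - y'‖)
    (hMnorm : ∀ k y, ‖M k y‖ ≤ ‖y‖)
    (hMcomm : ∀ k y, M k (LτP k y) = LτH (k + 1) (M k y))
    (A : ∀ k, Lp (H k) 2 (volume : Measure (EuclideanSpace ℝ (Fin d))) →L[ℝ]
              Lp (H k) 2 (volume : Measure (EuclideanSpace ℝ (Fin d))))
    (hA : ∀ k, ‖A k‖ ≤ 1)
    (x : Lp (H 0) 2 (volume : Measure (EuclideanSpace ℝ (Fin d))))
    (y z : ∀ k, Lp (H k) 2 (volume : Measure (EuclideanSpace ℝ (Fin d))))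
    (hy0 : y 0 = A 0 (LτH 0 x)) (hz0 : z 0 = A 0 x)
    (hy : ∀ k < n, y (k + 1) = A (k + 1) (M k (P k (y k))))
    (hz : ∀ k < n, z (k + 1) = A (k + 1) (M k (P k (z k)))) :
    ‖y n - z n‖ ≤
      ((∑ k ∈ Finset.range n,
          ‖((P k).comp (A k)).comp (LτH k) - (LτP k).comp ((P k).comp (A k))‖) +
        ‖(A n).comp (LτH n) - (LτH n).comp (A n)‖ +
        ‖(LτH n).comp (A n) - A n‖) * ‖x‖ :=
  stmt_2_general n H PP LτH LτP P hPnorm M hMlip hMnorm hMcomm A hA x y z hy0 hz0 hy hz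
end

section
/- Non-expansiveness of homogeneous dot-product kernel mappings (Lemma 1). Let P be a real inner product space and let κ(t) = Σ_{j≥0} b_j t^j with b_j ≥ 0 for all j, Σ_j b_j < ∞ and Σ_j j b_j < ∞, normalized so that κ(1) = 1 and κ'(1) = 1. Define the homogeneous dot-product kernel K(z, z') = ‖z‖ ‖z'‖ κ(⟨z, z'⟩ / (‖z‖ ‖z'‖)) for z, z' ≠ 0 and K(z, z') = 0 if z = 0 or z' = 0. Then for all z, z' ∈ P: K(z, z) + K(z', z') − 2 K(z, z') ≤ ‖z − z'‖²; equivalently, any kernel feature map φ of K satisfies ‖φ(z) − φ(z')‖ ≤ ‖z − z'‖. -/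
open scoped RealInnerProductSpace Classical

/-- The homogeneous dot-product kernel `K(z,z') = ‖z‖‖z'‖ κ(⟨z,z'⟩/(‖z‖‖z'‖))`
for `z, z' ≠ 0`, and `0` if `z = 0` or `z' = 0`, where `κ(t) = ∑ b_j t^j`. -/
noncomputable def hdpKernel {P : Type*} [NormedAddCommGroup P] [InnerProductSpace ℝ P]
    (b : ℕ → ℝ) (z z' : P) : ℝ :=
  if z = 0 ∨ z' = 0 then 0
  else ‖z‖ * ‖z'‖ * ∑' j : ℕ, b j * (⟪z, z'⟫ / (‖z‖ * ‖z'‖)) ^ j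

/-!
On `[-1, 1]` the power series `κ` with nonnegative coefficients lies above its
tangent line at `1`, termwise by Bernoulli's inequality `t ^ j ≥ 1 + j (t - 1)`. With
`κ(1) = κ'(1) = 1` this tangent line is `t ↦ t`, so `K(z, z') ≥ ⟪z, z'⟫`, while
`K(z, z) = ‖z‖²`; hence `K(z, z) + K(z', z') - 2 K(z, z') ≤ ‖z‖² + ‖z'‖² - 2 ⟪z, z'⟫`.
-/

section PowerSeries

variable {b : ℕ → ℝ} {t : ℝ}

lemma summable_mul_pow_of_abs_le_one (hb : ∀ j, 0 ≤ b j) (hsum : Summable b) (ht : |t| ≤ 1) :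
    Summable fun j ↦ b j * t ^ j := by
  refine Summable.of_norm_bounded hsum fun j ↦ ?_
  rw [Real.norm_eq_abs, abs_mul, abs_of_nonneg (hb j), abs_pow]
  exact mul_le_of_le_one_right (hb j) (pow_le_one₀ (abs_nonneg t) ht)

lemma tsum_add_mul_tsum_le_tsum_mul_pow (hb : ∀ j, 0 ≤ b j) (hsum : Summable b)
    (hsum' : Summable fun j : ℕ ↦ (j : ℝ) * b j) (ht : |t| ≤ 1) :
    ∑' j, b j + (t - 1) * ∑' j : ℕ, (j : ℝ) * b j ≤ ∑' j, b j * t ^ j := by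
  rw [← tsum_mul_left, ← hsum.tsum_add (hsum'.mul_left _)]
  refine (hsum.add (hsum'.mul_left _)).tsum_le_tsum (fun j ↦ ?_)
    (summable_mul_pow_of_abs_le_one hb hsum ht)
  have bernoulli := one_add_mul_sub_le_pow (neg_le_of_abs_le ht) j
  calc b j + (t - 1) * (j * b j) = b j * (1 + j * (t - 1)) := by ring
    _ ≤ b j * t ^ j := mul_le_mul_of_nonneg_left bernoulli (hb j)

end PowerSeries

section Kernel

variable {P : Type*} [NormedAddCommGroup P] [InnerProductSpace ℝ P] (b : ℕ → ℝ)

lemma hdpKernel_of_ne_zero {z z' : P} (hz : z ≠ 0) (hz' : z' ≠ 0) :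
    hdpKernel b z z' = ‖z‖ * ‖z'‖ * ∑' j : ℕ, b j * (⟪z, z'⟫ / (‖z‖ * ‖z'‖)) ^ j := by
  simp [hdpKernel, hz, hz']

@[simp]
lemma hdpKernel_zero_left (z' : P) : hdpKernel b 0 z' = 0 := by
  simp [hdpKernel]

@[simp]
lemma hdpKernel_zero_right (z : P) : hdpKernel b z 0 = 0 := by
  simp [hdpKernel]

lemma hdpKernel_self (z : P) : hdpKernel b z z = (∑' j, b j) * ‖z‖ ^ 2 := by
  rcases eq_or_ne z 0 with rfl | hz
  · simp
  have hcos : ⟪z, z⟫ / (‖z‖ * ‖z‖) = 1 := by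
    rw [real_inner_self_eq_norm_mul_norm, div_self (by positivity)]
  rw [hdpKernel_of_ne_zero b hz hz, hcos]
  simp only [one_pow, mul_one]
  ring

lemma real_inner_le_hdpKernel {b : ℕ → ℝ} (hb : ∀ j, 0 ≤ b j) (hsum : Summable b)
    (hsum' : Summable fun j : ℕ ↦ (j : ℝ) * b j)
    (hone : ∑' j, b j = 1) (hderiv : ∑' j : ℕ, (j : ℝ) * b j = 1) {z z' : P}
    (hz : z ≠ 0) (hz' : z' ≠ 0) : ⟪z, z'⟫ ≤ hdpKernel b z z' := by
  have tangent := tsum_add_mul_tsum_le_tsum_mul_pow hb hsum hsum'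
    (abs_real_inner_div_norm_mul_norm_le_one z z')
  rw [hone, hderiv, mul_one, add_sub_cancel] at tangent
  rw [hdpKernel_of_ne_zero b hz hz']
  calc ⟪z, z'⟫ = ‖z‖ * ‖z'‖ * (⟪z, z'⟫ / (‖z‖ * ‖z'‖)) := by
        field_simp [norm_ne_zero_iff.mpr hz, norm_ne_zero_iff.mpr hz']
    _ ≤ _ := by gcongr

end Kernel

/-- Non-expansiveness of homogeneous dot-product kernel mappings (Lemma 1):
if `κ(1) = 1` and `κ'(1) = 1`, then `K(z,z) + K(z',z') − 2K(z,z') ≤ ‖z − z'‖²`. -/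
theorem stmt_5 {P : Type*} [NormedAddCommGroup P] [InnerProductSpace ℝ P]
    (b : ℕ → ℝ) (hb : ∀ j, 0 ≤ b j)
    (hsum : Summable b) (hsum' : Summable fun j : ℕ => (j : ℝ) * b j)
    (hone : (∑' j, b j) = 1) (hderiv : (∑' j : ℕ, (j : ℝ) * b j) = 1) :
    ∀ z z' : P,
      hdpKernel b z z + hdpKernel b z' z' - 2 * hdpKernel b z z' ≤ ‖z - z'‖ ^ 2 := by
  intro z z'
  rw [hdpKernel_self, hdpKernel_self, hone]
  rcases eq_or_ne z 0 with rfl | hz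
  · simp
  rcases eq_or_ne z' 0 with rfl | hz'
  · simp
  have := real_inner_le_hdpKernel hb hsum hsum' hone hderiv hz hz'
  rw [norm_sub_sq_real]
  linarith
end

section
/- Boundedness of the diffeomorphism action operator on L². Let τ : ℝ^d → ℝ^d be a C¹ map with ‖∇τ‖_∞ ≤ 1/2 and let H be a separable real Hilbert space. Then for every f ∈ L²(ℝ^d, H), the function L_τ f(u) = f(u − τ(u)) belongs to L²(ℝ^d, H) and ‖L_τ f‖² ≤ (1 − ‖∇τ‖_∞)^{-d} ‖f‖²; in particular the operator L_τ is bounded with operator norm ‖L_τ‖ ≤ (1 − ‖∇τ‖_∞)^{-d/2} ≤ 2^{d/2}. -/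
open MeasureTheory Set Metric
open scoped ENNReal NNReal

/-!
The map `φ u = u - τ u` has derivative `1 - ∇τ u`, whose determinant is at least `(1 - s)^d` with
`s = ‖∇τ‖_∞`: a Neumann series inverts it, and the determinant of the inverse is bounded by the
volume of the image of the unit ball. Since `τ` is a contraction, `φ` is injective, so the
change-of-variables formula gives `φ_* vol ≤ (1 - s)^{-d} vol`, and
`‖f ∘ φ‖₂² = ∫ ‖f‖² d(φ_* vol)` yields the bound.
-/

namespace ContinuousLinearMap

variable {E : Type*} [NormedAddCommGroup E] [NormedSpace ℝ E] [FiniteDimensional ℝ E]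

theorem abs_det_le_norm_pow (B : E →L[ℝ] E) : |B.det| ≤ ‖B‖ ^ Module.finrank ℝ E := by
  nontriviality E
  borelize E
  let μ : Measure E := Measure.addHaar
  have himage : B '' ball 0 1 ⊆ closedBall 0 ‖B‖ := by
    rintro _ ⟨x, hx, rfl⟩
    simpa using B.le_of_opNorm_le_of_le le_rfl (mem_ball_zero_iff.1 hx).le
  have hvol : ENNReal.ofReal |B.det| * μ (ball 0 1)
      ≤ ENNReal.ofReal (‖B‖ ^ Module.finrank ℝ E) * μ (ball 0 1) := by
    rw [← μ.addHaar_image_continuousLinearMap, ← μ.addHaar_closedBall 0 (norm_nonneg B)]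
    exact measure_mono himage
  rwa [ENNReal.mul_le_mul_iff_left (measure_ball_pos μ 0 one_pos).ne' measure_ball_lt_top.ne,
    ENNReal.ofReal_le_ofReal_iff (by positivity)] at hvol

theorem one_sub_pow_le_abs_det_one_sub {A : E →L[ℝ] E} {s : ℝ} (hA : ‖A‖ ≤ s) (hs : s < 1) :
    (1 - s) ^ Module.finrank ℝ E ≤ |(1 - A).det| := by
  nontriviality E
  have hA1 : ‖A‖ < 1 := hA.trans_lt hs
  set C : E →L[ℝ] E := ∑' n : ℕ, A ^ n
  have hdet : (1 - A).det * C.det = 1 := by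
    have := congrArg det (mul_neg_geom_series A hA1)
    simpa [ContinuousLinearMap.det] using this
  have hC : ‖C‖ ≤ (1 - s)⁻¹ := by
    have := tsum_geometric_le_of_norm_lt_one A hA1
    rw [norm_one, sub_self, zero_add] at this
    exact this.trans (inv_anti₀ (by linarith) (by linarith))
  have hCdet : |C.det| ≤ (1 - s)⁻¹ ^ Module.finrank ℝ E :=
    C.abs_det_le_norm_pow.trans (pow_le_pow_left₀ (norm_nonneg _) hC _)
  have hCdet_pos : 0 < |C.det| := abs_pos.2 (right_ne_zero_of_mul_eq_one hdet)
  calc (1 - s) ^ Module.finrank ℝ E = ((1 - s)⁻¹ ^ Module.finrank ℝ E)⁻¹ := by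
        rw [inv_pow, inv_inv]
    _ ≤ |C.det|⁻¹ := inv_anti₀ hCdet_pos hCdet
    _ = |(1 - A).det| := by
        rw [← abs_inv, inv_eq_of_mul_eq_one_left hdet]

end ContinuousLinearMap

theorem LipschitzWith.injective_id_sub {E : Type*} [NormedAddCommGroup E] {K : ℝ≥0} {τ : E → E}
    (hτ : LipschitzWith K τ) (hK : K < 1) : Function.Injective fun u => u - τ u :=
  (AntilipschitzWith.id.add_sub_lipschitzWith (Kg := K) (g := fun u => u - τ u)
    (by convert hτ.neg using 1; funext u; simp) (by simpa using hK)).injective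

namespace MeasureTheory

section ChangeOfVariables

variable {E : Type*} [NormedAddCommGroup E] [NormedSpace ℝ E] [FiniteDimensional ℝ E]
  [MeasurableSpace E] [BorelSpace E] (μ : Measure E) [μ.IsAddHaarMeasure]

theorem Measure.map_le_smul_of_le_abs_det {φ : E → E} {φ' : E → E →L[ℝ] E}
    (hφ : ∀ x, HasFDerivAt φ (φ' x) x) (hinj : Function.Injective φ) {c : ℝ} (hc : 0 < c)
    (hdet : ∀ x, c ≤ |(φ' x).det|) :
    μ.map φ ≤ ENNReal.ofReal c⁻¹ • μ := by
  have hφm : Measurable φ := (continuous_iff_continuousAt.2 fun x => (hφ x).continuousAt).measurable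
  refine Measure.le_iff.2 fun t ht => ?_
  have hpre : ENNReal.ofReal c * μ (φ ⁻¹' t) ≤ μ t :=
    calc ENNReal.ofReal c * μ (φ ⁻¹' t) = ∫⁻ _ in φ ⁻¹' t, ENNReal.ofReal c ∂μ := by
          rw [setLIntegral_const, mul_comm]
      _ ≤ ∫⁻ x in φ ⁻¹' t, ENNReal.ofReal |(φ' x).det| ∂μ :=
          lintegral_mono fun x => ENNReal.ofReal_le_ofReal (hdet x)
      _ = μ (φ '' (φ ⁻¹' t)) := lintegral_abs_det_fderiv_eq_addHaar_image μ (hφm ht)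
          (fun x _ => (hφ x).hasFDerivWithinAt) hinj.injOn
      _ ≤ μ t := measure_mono (image_preimage_subset φ t)
  calc μ.map φ t = ENNReal.ofReal c⁻¹ * (ENNReal.ofReal c * μ (φ ⁻¹' t)) := by
        rw [Measure.map_apply hφm ht, ← mul_assoc, ← ENNReal.ofReal_mul (inv_nonneg.2 hc.le),
          inv_mul_cancel₀ hc.ne', ENNReal.ofReal_one, one_mul]
    _ ≤ (ENNReal.ofReal c⁻¹ • μ) t := by
        rw [Measure.smul_apply, smul_eq_mul]
        gcongr

theorem Measure.map_id_sub_le_smul {τ : E → E} (hτ : Differentiable ℝ τ) {s : ℝ}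
    (hτs : ∀ u, ‖fderiv ℝ τ u‖ ≤ s) (hs : s < 1) :
    μ.map (fun u => u - τ u) ≤ ENNReal.ofReal ((1 - s) ^ (-(Module.finrank ℝ E : ℝ))) • μ := by
  have hlip : LipschitzWith s.toNNReal τ :=
    lipschitzWith_of_nnnorm_fderiv_le hτ fun u => by
      rw [← norm_toNNReal]; exact Real.toNNReal_le_toNNReal (hτs u)
  have hpos : 0 < (1 - s) ^ Module.finrank ℝ E := pow_pos (by linarith) _
  rw [Real.rpow_neg (by linarith), Real.rpow_natCast]
  exact Measure.map_le_smul_of_le_abs_det μ (fun u => (hasFDerivAt_id u).sub (hτ u).hasFDerivAt)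
    (hlip.injective_id_sub (Real.toNNReal_lt_one.2 hs)) hpos
    fun u => ContinuousLinearMap.one_sub_pow_le_abs_det_one_sub (hτs u) hs

end ChangeOfVariables

section CompositionLp

variable {α β F : Type*} [MeasurableSpace α] [MeasurableSpace β] [NormedAddCommGroup F]
  {μ : Measure α} {ν : Measure β} {φ : α → β} {c : ℝ≥0∞} {p : ℝ≥0∞} {f : β → F}

theorem MemLp.comp_of_map_le_smul (hφ : AEMeasurable φ μ) (hc : c ≠ ∞) (hμν : μ.map φ ≤ c • ν)
    (hf : MemLp f p ν) : MemLp (f ∘ φ) p μ :=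
  (hf.of_measure_le_smul hc hμν).comp_of_map hφ

theorem eLpNorm_comp_le_of_map_le_smul (hφ : AEMeasurable φ μ) (hμν : μ.map φ ≤ c • ν)
    (hf : AEStronglyMeasurable f ν) :
    eLpNorm (f ∘ φ) p μ ≤ c ^ (1 / p).toReal * eLpNorm f p ν := by
  rw [← eLpNorm_map_measure (hf.mono_ac (Measure.absolutelyContinuous_of_le_smul hμν)) hφ]
  exact eLpNorm_le_of_measure_le_smul hμν

end CompositionLp

end MeasureTheory

theorem stmt_13_general {d : ℕ} {H : Type*} [NormedAddCommGroup H]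
    (τ : EuclideanSpace ℝ (Fin d) → EuclideanSpace ℝ (Fin d))
    (hτ : ContDiff ℝ 1 τ) (hgrad : ∀ u, ‖fderiv ℝ τ u‖ ≤ 1 / 2)
    (f : EuclideanSpace ℝ (Fin d) → H) (hf : MemLp f 2 volume) :
    MemLp (fun u => f (u - τ u)) 2 volume ∧
    eLpNorm (fun u => f (u - τ u)) 2 volume ≤
      ENNReal.ofReal ((1 - ⨆ u, ‖fderiv ℝ τ u‖) ^ (-(d : ℝ) / 2)) *
        eLpNorm f 2 volume ∧
    eLpNorm (fun u => f (u - τ u)) 2 volume ≤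
      ENNReal.ofReal ((2 : ℝ) ^ ((d : ℝ) / 2)) * eLpNorm f 2 volume := by
  set S : ℝ := ⨆ u, ‖fderiv ℝ τ u‖
  have hτS : ∀ u, ‖fderiv ℝ τ u‖ ≤ S := le_ciSup ⟨1 / 2, forall_mem_range.2 hgrad⟩
  have hS : S ≤ 1 / 2 := ciSup_le hgrad
  have hmap := volume.map_id_sub_le_smul (hτ.differentiable one_ne_zero) hτS (by linarith)
  rw [finrank_euclideanSpace_fin] at hmap
  have hφ : AEMeasurable (fun u => u - τ u) volume :=
    (continuous_id.sub hτ.continuous).aemeasurable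
  have hbound : eLpNorm (fun u => f (u - τ u)) 2 volume ≤
      ENNReal.ofReal ((1 - S) ^ (-(d : ℝ) / 2)) * eLpNorm f 2 volume := by
    refine (eLpNorm_comp_le_of_map_le_smul hφ hmap hf.1).trans_eq (congrArg (· * _) ?_)
    rw [ENNReal.ofReal_rpow_of_nonneg (Real.rpow_nonneg (by linarith) _) (by positivity),
      ← Real.rpow_mul (by linarith)]
    norm_num [neg_div, div_eq_mul_one_div (d : ℝ) 2]
  have hconst : (1 - S) ^ (-(d : ℝ) / 2) ≤ 2 ^ ((d : ℝ) / 2) :=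
    calc (1 - S) ^ (-(d : ℝ) / 2) ≤ (1 / 2) ^ (-(d : ℝ) / 2) :=
          Real.rpow_le_rpow_of_nonpos (by norm_num) (by linarith) (by linarith [d.cast_nonneg (α := ℝ)])
      _ = 2 ^ ((d : ℝ) / 2) := by
          rw [one_div, Real.inv_rpow zero_le_two, ← Real.rpow_neg zero_le_two, neg_div, neg_neg]
  exact ⟨hf.comp_of_map_le_smul hφ ENNReal.ofReal_ne_top hmap, hbound,
    hbound.trans (by gcongr)⟩

/-- Boundedness of the diffeomorphism action operator on `L²`: if `τ` is `C¹` with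
`‖∇τ‖_∞ ≤ 1/2`, then `L_τ f (u) = f(u − τ(u))` is in `L²` and
`‖L_τ f‖ ≤ (1 − ‖∇τ‖_∞)^{-d/2} ‖f‖ ≤ 2^{d/2} ‖f‖`. -/
theorem stmt_13 {d : ℕ} {H : Type*} [NormedAddCommGroup H] [InnerProductSpace ℝ H]
    [CompleteSpace H] [SecondCountableTopology H]
    (τ : EuclideanSpace ℝ (Fin d) → EuclideanSpace ℝ (Fin d))
    (hτ : ContDiff ℝ 1 τ) (hgrad : ∀ u, ‖fderiv ℝ τ u‖ ≤ 1 / 2)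
    (f : EuclideanSpace ℝ (Fin d) → H) (hf : MemLp f 2 volume) :
    MemLp (fun u => f (u - τ u)) 2 volume ∧
    eLpNorm (fun u => f (u - τ u)) 2 volume ≤
      ENNReal.ofReal ((1 - ⨆ u, ‖fderiv ℝ τ u‖) ^ (-(d : ℝ) / 2)) *
        eLpNorm f 2 volume ∧
    eLpNorm (fun u => f (u - τ u)) 2 volume ≤
      ENNReal.ofReal ((2 : ℝ) ^ ((d : ℝ) / 2)) * eLpNorm f 2 volume :=
  stmt_13_general τ hτ hgrad f hf
end

section
/- Pointwise kernel domination implies domination of pooled norms (key step of the norm preservation lemma). Let H and P be separable real Hilbert spaces, let g : ℝ^d → ℝ≥0 be a nonnegative integrable function, and let A denote convolution with g, i.e., A w(u) = ∫_{ℝ^d} g(u − v) w(v) dv. Let y ∈ L²(ℝ^d, H) and z ∈ L²(ℝ^d, P) be such that ⟨y(v), y(v')⟩_H ≥ ⟨z(v), z(v')⟩_P for almost every pair (v, v') ∈ ℝ^d × ℝ^d, and assume A y ∈ L²(ℝ^d, H) and A z ∈ L²(ℝ^d, P). Then ‖A y‖ ≥ ‖A z‖. -/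
/-!
For almost every `u`, both convolution integrals converge absolutely. Expanding
`‖∫ v, g (u - v) • y v‖ ^ 2` as the double integral of
`g (u - v) * g (u - v') * ⟪y v, y v'⟫` and using `g ≥ 0` transfers the kernel domination
to `‖A z (u)‖ ≤ ‖A y (u)‖` pointwise a.e., and the `L²` norms compare by monotonicity.
-/

open MeasureTheory
open scoped RealInnerProductSpace

namespace MeasureTheory

section Convolution

variable {G W : Type*} [MeasurableSpace G] [AddGroup G] [MeasurableAdd₂ G] [MeasurableNeg G]
  {μ : Measure G} [SFinite μ] [μ.IsAddLeftInvariant] [μ.IsAddRightInvariant] [μ.IsNegInvariant]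
  [NormedAddCommGroup W] [NormedSpace ℝ W]

-- `‖w v‖ ≤ 1 + ‖w v‖ ^ 2` reduces the `L¹ * L²` case to the `L¹ * L¹` convolution theorem.
theorem Integrable.ae_integrable_smul_comp_sub_left {g : G → ℝ} {w : G → W}
    (hg : Integrable g μ) (hw : MemLp w 2 μ) :
    ∀ᵐ u ∂μ, Integrable (fun v => g (u - v) • w v) μ := by
  have hw2 : Integrable (fun v => ‖w v‖ ^ 2) μ :=
    (memLp_two_iff_integrable_sq_norm hw.1).mp hw
  filter_upwards [hw2.ae_convolution_exists (ContinuousLinearMap.mul ℝ ℝ) hg] with u hu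
  have hgu : Integrable (fun v => g (u - v)) μ := hg.comp_sub_left u
  refine (hgu.norm.add hu.integrable.norm).mono' (hgu.1.smul hw.1) (.of_forall fun v => ?_)
  have hwv : ‖w v‖ ≤ 1 + ‖w v‖ ^ 2 := by nlinarith [sq_nonneg (‖w v‖ - 1)]
  calc ‖g (u - v) • w v‖ = ‖g (u - v)‖ * ‖w v‖ := norm_smul _ _
    _ ≤ ‖g (u - v)‖ * (1 + ‖w v‖ ^ 2) := by gcongr
    _ = ‖g (u - v)‖ + ‖(ContinuousLinearMap.mul ℝ ℝ) (‖w v‖ ^ 2) (g (u - v))‖ := by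
      simp only [ContinuousLinearMap.mul_apply', norm_mul, norm_pow, norm_norm]; ring

end Convolution

section InnerProduct

variable {α H P : Type*} [MeasurableSpace α] {μ : Measure α}
  [NormedAddCommGroup H] [InnerProductSpace ℝ H] [NormedAddCommGroup P] [InnerProductSpace ℝ P]

theorem Integrable.integrable_inner_prod {f : α → H} (hf : Integrable f μ) :
    Integrable (fun p : α × α => ⟪f p.1, f p.2⟫) (μ.prod μ) :=
  (hf.norm.mul_prod hf.norm).mono' (hf.1.comp_fst.inner hf.1.comp_snd)
    (.of_forall fun _ => norm_inner_le_norm _ _)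

variable [SFinite μ] [CompleteSpace H] [CompleteSpace P]

theorem sq_norm_integral_eq_integral_inner_prod {f : α → H} (hf : Integrable f μ) :
    ‖∫ v, f v ∂μ‖ ^ 2 = ∫ p, ⟪f p.1, f p.2⟫ ∂(μ.prod μ) := by
  rw [integral_prod _ hf.integrable_inner_prod, ← real_inner_self_eq_norm_sq,
    ← integral_inner hf]
  refine integral_congr_ae (.of_forall fun v => ?_)
  dsimp only
  rw [real_inner_comm, ← integral_inner hf]

theorem norm_integral_le_of_ae_inner_le {f : α → H} {h : α → P} (hf : Integrable f μ)
    (hh : Integrable h μ) (hle : ∀ᵐ p ∂(μ.prod μ), ⟪h p.1, h p.2⟫ ≤ ⟪f p.1, f p.2⟫) :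
    ‖∫ v, h v ∂μ‖ ≤ ‖∫ v, f v ∂μ‖ := by
  refine (pow_le_pow_iff_left₀ (norm_nonneg _) (norm_nonneg _) two_ne_zero).mp ?_
  rw [sq_norm_integral_eq_integral_inner_prod hf, sq_norm_integral_eq_integral_inner_prod hh]
  exact integral_mono_ae hh.integrable_inner_prod hf.integrable_inner_prod hle

end InnerProduct

end MeasureTheory

theorem stmt_18_general {d : ℕ} {H : Type*} [NormedAddCommGroup H] [InnerProductSpace ℝ H]
    [CompleteSpace H]
    {P : Type*} [NormedAddCommGroup P] [InnerProductSpace ℝ P]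
    [CompleteSpace P]
    (g : EuclideanSpace ℝ (Fin d) → ℝ) (hg : ∀ u, 0 ≤ g u) (hgint : Integrable g volume)
    (y : EuclideanSpace ℝ (Fin d) → H) (z : EuclideanSpace ℝ (Fin d) → P)
    (hy : MemLp y 2 volume) (hz : MemLp z 2 volume)
    (hdom : ∀ᵐ p : EuclideanSpace ℝ (Fin d) × EuclideanSpace ℝ (Fin d)
        ∂(volume.prod volume), ⟪z p.1, z p.2⟫ ≤ ⟪y p.1, y p.2⟫) :
    eLpNorm (fun u => ∫ v, g (u - v) • z v) 2 volume ≤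
      eLpNorm (fun u => ∫ v, g (u - v) • y v) 2 volume := by
  refine eLpNorm_mono_ae ?_
  filter_upwards [hgint.ae_integrable_smul_comp_sub_left hy,
    hgint.ae_integrable_smul_comp_sub_left hz] with u hAy hAz
  refine norm_integral_le_of_ae_inner_le hAy hAz ?_
  filter_upwards [hdom] with p hp
  simp only [real_inner_smul_left, real_inner_smul_right]
  exact mul_le_mul_of_nonneg_left (mul_le_mul_of_nonneg_left hp (hg _)) (hg _)

/-- Pointwise kernel domination implies domination of pooled norms (key step of the norm
preservation lemma): if `⟨y(v), y(v')⟩ ≥ ⟨z(v), z(v')⟩` for a.e. pairs `(v, v')`, and `A`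
denotes convolution with a nonnegative integrable filter `g`, then `‖A y‖ ≥ ‖A z‖`. -/
theorem stmt_18 {d : ℕ} {H : Type*} [NormedAddCommGroup H] [InnerProductSpace ℝ H]
    [CompleteSpace H] [SecondCountableTopology H]
    {P : Type*} [NormedAddCommGroup P] [InnerProductSpace ℝ P]
    [CompleteSpace P] [SecondCountableTopology P]
    (g : EuclideanSpace ℝ (Fin d) → ℝ) (hg : ∀ u, 0 ≤ g u) (hgint : Integrable g volume)
    (y : EuclideanSpace ℝ (Fin d) → H) (z : EuclideanSpace ℝ (Fin d) → P)
    (hy : MemLp y 2 volume) (hz : MemLp z 2 volume)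
    (hdom : ∀ᵐ p : EuclideanSpace ℝ (Fin d) × EuclideanSpace ℝ (Fin d)
        ∂(volume.prod volume), ⟪z p.1, z p.2⟫ ≤ ⟪y p.1, y p.2⟫)
    (hAy : MemLp (fun u => ∫ v, g (u - v) • y v) 2 volume)
    (hAz : MemLp (fun u => ∫ v, g (u - v) • z v) 2 volume) :
    eLpNorm (fun u => ∫ v, g (u - v) • z v) 2 volume ≤
      eLpNorm (fun u => ∫ v, g (u - v) • y v) 2 volume :=
  stmt_18_general g hg hgint y z hy hz hdom
end
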